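/- In a connected CES exchange market with gross-substitutes parameter δ > 0, the equilibrium price vector is unique up to positive scaling: if r and r' are two positive price vectors satisfying the equilibrium equations r_j^{1+δ} = Σ_i r_i C_{ij}/R_i(r) for all j (where R_i(r) = Σ_k C_{ik}/r_k^δ), then r' is a positive scalar multiple of r. -/
import Mathlib


open Finset

theorem equilibrium_unique_up_to_scaling {n : ℕ} (hn : 2 ≤ n)
    (C : Matrix (Fin n) (Fin n) ℝ) (δ : ℝ) (hδ : 0 < δ)
    (hCnn : ∀ i j, 0 ≤ C i j)
    (hconn : ∀ i j : Fin n, Relation.ReflTransGen (fun a b => 0 < C a b) i j)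
    (r r' : Fin n → ℝ) (hr : ∀ i, 0 < r i) (hr' : ∀ i, 0 < r' i)
    (heq : ∀ j, r j ^ (1 + δ) = ∑ i, r i * C i j / (∑ k, C i k / r k ^ δ))
    (heq' : ∀ j, r' j ^ (1 + δ) = ∑ i, r' i * C i j / (∑ k, C i k / r' k ^ δ)) :
    ∃ c : ℝ, 0 < c ∧ r' = fun i => c * r i := by
  classical
  haveI : Nontrivial (Fin n) := Fin.nontrivial_iff_two_le.mpr hn
  obtain ⟨j0, -, hj0⟩ := Finset.exists_max_image (univ : Finset (Fin n))
    (fun i => r' i / r i) Finset.univ_nonempty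
  set M : ℝ := r' j0 / r j0 with hMdef
  have hM : 0 < M := div_pos (hr' j0) (hr j0)
  have hle : ∀ i, r' i ≤ M * r i := by
    intro i
    have := hj0 i (mem_univ i)
    rw [div_le_iff₀ (hr i)] at this
    simpa [hMdef, mul_comm] using this
  have hrow : ∀ i, ∃ k, 0 < C i k := by
    intro i
    obtain ⟨j, hj⟩ := exists_ne i
    rcases (hconn i j).cases_head with h | ⟨b, hb, -⟩
    · exact absurd h.symm hj
    · exact ⟨b, hb⟩
  have hspos : ∀ (x : Fin n → ℝ), (∀ k, 0 < x k) → ∀ i, 0 < ∑ k, C i k / x k ^ δ := by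
    intro x hx i
    obtain ⟨k, hk⟩ := hrow i
    exact Finset.sum_pos'
      (fun m _ => div_nonneg (hCnn i m) (Real.rpow_pos_of_pos (hx m) δ).le)
      ⟨k, mem_univ k, div_pos hk (Real.rpow_pos_of_pos (hx k) δ)⟩
  have hA : ∀ i, (∑ k, C i k / r k ^ δ) ≤ M ^ δ * ∑ k, C i k / r' k ^ δ := by
    intro i
    rw [Finset.mul_sum]
    refine Finset.sum_le_sum fun k _ => ?_
    have h1 : r' k ^ δ ≤ M ^ δ * r k ^ δ := by
      have h := Real.rpow_le_rpow (hr' k).le (hle k) hδ.le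
      rwa [Real.mul_rpow hM.le (hr k).le] at h
    rw [← mul_div_assoc, div_le_div_iff₀ (Real.rpow_pos_of_pos (hr k) δ)
      (Real.rpow_pos_of_pos (hr' k) δ)]
    have := mul_le_mul_of_nonneg_left h1 (hCnn i k)
    nlinarith
  have hquot : ∀ (X : ℝ), 0 ≤ X → ∀ i,
      X / (∑ k, C i k / r' k ^ δ) ≤ M ^ δ * X / (∑ k, C i k / r k ^ δ) := by
    intro X hX i
    rw [div_le_div_iff₀ (hspos r' hr' i) (hspos r hr i)]
    have := mul_le_mul_of_nonneg_left (hA i) hX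
    nlinarith
  have hterm : ∀ i j, r' i * C i j / (∑ k, C i k / r' k ^ δ)
      ≤ M ^ (1 + δ) * (r i * C i j / (∑ k, C i k / r k ^ δ)) := by
    intro i j
    have h1 : r' i * C i j / (∑ k, C i k / r' k ^ δ)
        ≤ (M * r i) * C i j / (∑ k, C i k / r' k ^ δ) :=
      (div_le_div_iff_of_pos_right (hspos r' hr' i)).mpr
        (mul_le_mul_of_nonneg_right (hle i) (hCnn i j))
    have h2 := hquot ((M * r i) * C i j)
      (mul_nonneg (mul_nonneg hM.le (hr i).le) (hCnn i j)) i
    have h3 : M ^ δ * ((M * r i) * C i j) / (∑ k, C i k / r k ^ δ)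
        = M ^ (1 + δ) * (r i * C i j / (∑ k, C i k / r k ^ δ)) := by
      rw [Real.rpow_add hM, Real.rpow_one]; ring
    linarith [h3 ▸ h2]
  have hkey : ∀ j, r' j = M * r j → ∀ i, 0 < C i j → r' i = M * r i := by
    intro j hj i hCij
    have hEq : ∑ i, r' i * C i j / (∑ k, C i k / r' k ^ δ)
        = ∑ i, M ^ (1 + δ) * (r i * C i j / (∑ k, C i k / r k ^ δ)) := by
      rw [← Finset.mul_sum, ← heq j, ← heq' j, hj,
        Real.mul_rpow hM.le (hr j).le]
    have hti := (Finset.sum_eq_sum_iff_of_le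
      (fun i _ => hterm i j)).mp hEq i (mem_univ i)
    by_contra hne
    have hlt : r' i < M * r i := lt_of_le_of_ne (hle i) hne
    have h1 : r' i * C i j / (∑ k, C i k / r' k ^ δ)
        < (M * r i) * C i j / (∑ k, C i k / r' k ^ δ) :=
      (div_lt_div_iff_of_pos_right (hspos r' hr' i)).mpr
        (mul_lt_mul_of_pos_right hlt hCij)
    have h2 := hquot ((M * r i) * C i j)
      (mul_nonneg (mul_nonneg hM.le (hr i).le) (hCnn i j)) i
    have h3 : M ^ δ * ((M * r i) * C i j) / (∑ k, C i k / r k ^ δ)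
        = M ^ (1 + δ) * (r i * C i j / (∑ k, C i k / r k ^ δ)) := by
      rw [Real.rpow_add hM, Real.rpow_one]; ring
    rw [h3] at h2
    linarith [hti]
  have hj0eq : r' j0 = M * r j0 := by
    rw [hMdef, div_mul_cancel₀ _ (hr j0).ne']
  have hprop : ∀ i j, Relation.ReflTransGen (fun a b => 0 < C a b) i j →
      r' j = M * r j → r' i = M * r i := by
    intro i j h
    induction h with
    | refl => exact id
    | tail hab hbc ih => exact fun hj => ih (hkey _ hj _ hbc)
  refine ⟨M, hM, funext fun i => hprop i j0 (hconn i j0) hj0eq⟩
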